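/- Let d ≥ 1, let α be a real algebraic number of degree d+1, and let ε > 0. Assume the p-adic Schmidt subspace theorem consequence: all but finitely many nonzero integer polynomials P(X) = a_0 + a_1 X + ... + a_d X^d of degree at most d with a_0 ≠ 0 satisfy |P(α)|·|a_0|_p ≥ H(P)^{−d−ε}. Then for every real algebraic number ξ of degree at most d with sufficiently large height, |α − ξ| · min{|Norm(ξ)|_p, 1} ≥ H(ξ)^{−d−1−2ε}. -/

import Mathlib

/-!
Let `P` be the minimal polynomial of `ξ`, of height `H`, with constant coefficient `a₀ ≠ 0`.
Then `min {|Norm ξ|_p, 1} ≥ |a₀|_p ≥ 1 / |a₀| ≥ 1 / H`, which settles the case `|α - ξ| ≥ 1`.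
Otherwise `|P(α)| = |P(α) - P(ξ)| ≤ C H |α - ξ|` with `C` depending only on `d` and `α`, and the
hypothesis applied to `P` gives `H^(-d-ε) ≤ |P(α)| |a₀|_p ≤ C H |α - ξ| min {|Norm ξ|_p, 1}`;
for large `H` the constant is absorbed as `C ≤ H^ε`.
-/

/-- Naive height of an integer polynomial: max of absolute values of coefficients. -/
def intPolyHeight (P : Polynomial ℤ) : ℕ :=
  P.support.sup fun k => (P.coeff k).natAbs

open Polynomial Filter

lemma natAbs_coeff_le_intPolyHeight (P : ℤ[X]) (k : ℕ) :
    (P.coeff k).natAbs ≤ intPolyHeight P := by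
  by_cases hk : k ∈ P.support
  · exact Finset.le_sup (f := fun k => (P.coeff k).natAbs) hk
  · simp [notMem_support_iff.mp hk]

lemma abs_coeff_le_intPolyHeight (P : ℤ[X]) (k : ℕ) :
    |(P.coeff k : ℝ)| ≤ intPolyHeight P := by
  rw [← Int.cast_abs, Int.abs_eq_natAbs]
  exact_mod_cast natAbs_coeff_le_intPolyHeight P k

lemma one_le_intPolyHeight {P : ℤ[X]} (hP : P ≠ 0) : 1 ≤ intPolyHeight P := by
  obtain ⟨k, hk⟩ := support_nonempty.mpr hP
  exact (Int.natAbs_pos.mpr (mem_support_iff.mp hk)).trans_le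
    (natAbs_coeff_le_intPolyHeight P k)

lemma coeff_zero_ne_zero_of_irreducible_of_aeval_eq_zero {P : ℤ[X]} (hP : Irreducible P)
    {ξ : ℝ} (hξ : ξ ≠ 0) (hroot : aeval ξ P = 0) : P.coeff 0 ≠ 0 := by
  intro h0
  obtain ⟨Q, rfl⟩ := X_dvd_iff.mpr h0
  obtain ⟨u, hu, rfl⟩ :=
    isUnit_iff.mp ((hP.isUnit_or_isUnit rfl).resolve_left not_isUnit_X)
  have hu0 : (algebraMap ℤ ℝ) u ≠ 0 := by simpa using hu.ne_zero
  rw [map_mul, aeval_X, aeval_C] at hroot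
  exact mul_ne_zero hξ hu0 hroot

lemma inv_natAbs_le_padicNorm (p : ℕ) [Fact p.Prime] {z : ℤ} (hz : z ≠ 0) :
    (z.natAbs : ℚ)⁻¹ ≤ padicNorm p z := by
  rw [padicNorm.eq_zpow_of_nonzero (Int.cast_ne_zero.mpr hz), padicValRat.of_int, zpow_neg,
    zpow_natCast]
  have hp : (0 : ℚ) < p := by exact_mod_cast (Fact.out : p.Prime).pos
  apply inv_anti₀ (pow_pos hp _)
  exact_mod_cast Nat.le_of_dvd (Int.natAbs_pos.mpr hz) pow_padicValNat_dvd

lemma inv_intPolyHeight_le_padicNorm_coeff_zero (p : ℕ) [Fact p.Prime] {P : ℤ[X]}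
    (h0 : P.coeff 0 ≠ 0) : (intPolyHeight P : ℝ)⁻¹ ≤ padicNorm p (P.coeff 0 : ℚ) := by
  have hpos : (0 : ℚ) < (P.coeff 0).natAbs := by exact_mod_cast Int.natAbs_pos.mpr h0
  have hle : ((P.coeff 0).natAbs : ℚ) ≤ intPolyHeight P := by
    exact_mod_cast natAbs_coeff_le_intPolyHeight P 0
  have h := (inv_anti₀ hpos hle).trans (inv_natAbs_le_padicNorm p h0)
  have h' := (Rat.cast_le (K := ℝ)).mpr h
  push_cast at h'
  exact h'

lemma intPolyHeight_rpow_le_padicNorm_coeff_zero (p : ℕ) [Fact p.Prime] {P : ℤ[X]}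
    (h0 : P.coeff 0 ≠ 0) {e : ℝ} (he : e ≤ -1) :
    (intPolyHeight P : ℝ) ^ e ≤ padicNorm p (P.coeff 0 : ℚ) := by
  have hP : P ≠ 0 := fun h => h0 (by rw [h, coeff_zero])
  have hH : (1 : ℝ) ≤ intPolyHeight P := by exact_mod_cast one_le_intPolyHeight hP
  calc (intPolyHeight P : ℝ) ^ e ≤ (intPolyHeight P : ℝ) ^ (-1 : ℝ) :=
        Real.rpow_le_rpow_of_exponent_le hH he
    _ = (intPolyHeight P : ℝ)⁻¹ := Real.rpow_neg_one _
    _ ≤ padicNorm p (P.coeff 0 : ℚ) := inv_intPolyHeight_le_padicNorm_coeff_zero p h0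

/-- Dividing by the integer `aₙ` can only increase the `p`-adic absolute value. -/
lemma padicNorm_coeff_zero_le_min_padicNorm_norm (p : ℕ) [Fact p.Prime] {P : ℤ[X]}
    (hP : P ≠ 0) :
    (padicNorm p (P.coeff 0 : ℚ) : ℝ) ≤ min (padicNorm p
      ((-1 : ℚ) ^ P.natDegree * (P.coeff 0 : ℚ) / (P.coeff P.natDegree : ℚ)) : ℝ) 1 := by
  have han : (P.coeff P.natDegree : ℚ) ≠ 0 := Int.cast_ne_zero.mpr (leadingCoeff_ne_zero.mpr hP)
  have hnorm : padicNorm p ((-1 : ℚ) ^ P.natDegree * P.coeff 0 / P.coeff P.natDegree)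
      = padicNorm p (P.coeff 0) / padicNorm p (P.coeff P.natDegree) := by
    simp [padicNorm.div, padicNorm.mul]
  have hlead : 0 < padicNorm p (P.coeff P.natDegree) :=
    (padicNorm.nonneg _).lt_of_ne' (padicNorm.nonzero han)
  have hle : padicNorm p (P.coeff 0) ≤ padicNorm p
      ((-1 : ℚ) ^ P.natDegree * P.coeff 0 / P.coeff P.natDegree) := by
    rw [hnorm]
    exact le_div_self (padicNorm.nonneg _) hlead (padicNorm.of_int _)
  exact le_min (by exact_mod_cast hle) (by exact_mod_cast padicNorm.of_int (P.coeff 0))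

lemma abs_aeval_sub_aeval_le {P : ℤ[X]} {d : ℕ} (hdeg : P.natDegree ≤ d) {x y M : ℝ}
    (hM : 1 ≤ M) (hx : |x| ≤ M) (hy : |y| ≤ M) :
    |aeval x P - aeval y P| ≤ (d + 1) * (intPolyHeight P * (d * M ^ d * |x - y|)) := by
  have hlt : P.natDegree < d + 1 := Nat.lt_succ_of_le hdeg
  rw [aeval_eq_sum_range' hlt, aeval_eq_sum_range' hlt, ← Finset.sum_sub_distrib]
  have hterm : ∀ i ∈ Finset.range (d + 1), |P.coeff i • x ^ i - P.coeff i • y ^ i|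
      ≤ intPolyHeight P * (d * M ^ d * |x - y|) := by
    intro i hi
    have hid : i ≤ d := Nat.lt_succ_iff.mp (Finset.mem_range.mp hi)
    have hpow : |x ^ i - y ^ i| ≤ d * M ^ d * |x - y| :=
      calc |x ^ i - y ^ i| ≤ |x - y| * i * max |x| |y| ^ (i - 1) := abs_pow_sub_pow_le ..
        _ ≤ |x - y| * d * M ^ d := by
          gcongr
          calc max |x| |y| ^ (i - 1) ≤ M ^ (i - 1) := by gcongr; exact max_le hx hy
            _ ≤ M ^ d := pow_le_pow_right₀ hM (by omega)
        _ = d * M ^ d * |x - y| := by ring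
    rw [zsmul_eq_mul, zsmul_eq_mul, ← mul_sub, abs_mul]
    exact mul_le_mul (abs_coeff_le_intPolyHeight P i) hpow (abs_nonneg _) (by positivity)
  calc _ ≤ ∑ i ∈ Finset.range (d + 1), |P.coeff i • x ^ i - P.coeff i • y ^ i| :=
        Finset.abs_sum_le_sum_abs _ _
    _ ≤ _ := by simpa using Finset.sum_le_card_nsmul _ _ _ hterm

lemma exists_abs_aeval_le_mul_intPolyHeight_mul (d : ℕ) (α : ℝ) :
    ∃ C : ℝ, ∀ (P : ℤ[X]) (ξ : ℝ), P.natDegree ≤ d → aeval ξ P = 0 → |α - ξ| < 1 →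
      |aeval α P| ≤ C * intPolyHeight P * |α - ξ| := by
  refine ⟨(d + 1) * (d * (1 + |α|) ^ d), fun P ξ hdeg hroot hnear => ?_⟩
  have hξ : |ξ| ≤ 1 + |α| := by
    have := abs_sub_abs_le_abs_sub ξ α
    rw [abs_sub_comm] at this
    linarith
  have h := abs_aeval_sub_aeval_le hdeg (le_add_of_nonneg_right (abs_nonneg α))
    (le_add_of_nonneg_left zero_le_one) hξ
  rw [hroot, sub_zero] at h
  linarith

lemma rpow_sub_le_of_rpow_le_rpow_mul {H a b x : ℝ} (hH : 0 < H) (h : H ^ a ≤ H ^ b * x) :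
    H ^ (a - b) ≤ x := by
  rw [Real.rpow_sub hH, div_le_iff₀ (Real.rpow_pos_of_pos hH b), mul_comm]
  exact h

theorem stmt18_general (p : ℕ) [hp : Fact p.Prime] (d : ℕ)
    (α : ℝ)
    (ε : ℝ) (hε : 0 < ε)
    (hSchmidt : ∃ S : Finset (Polynomial ℤ), ∀ P : Polynomial ℤ,
      P ≠ 0 → P.natDegree ≤ d → P.coeff 0 ≠ 0 → P ∉ S →
      (intPolyHeight P : ℝ) ^ (-(d : ℝ) - ε)
        ≤ |Polynomial.aeval α P| * (padicNorm p (P.coeff 0 : ℚ) : ℝ)) :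
    ∃ H₀ : ℕ, ∀ ξ : ℝ, ξ ≠ 0 → ∀ P : Polynomial ℤ,
      Irreducible P → P.natDegree ≤ d → Polynomial.aeval ξ P = 0 →
      H₀ ≤ intPolyHeight P →
      (intPolyHeight P : ℝ) ^ (-(d : ℝ) - 1 - 2 * ε)
        ≤ |α - ξ| * min ((padicNorm p ((-1 : ℚ) ^ P.natDegree
            * (P.coeff 0 : ℚ) / (P.coeff P.natDegree : ℚ)) : ℝ)) 1 := by
  obtain ⟨S, hS⟩ := hSchmidt
  obtain ⟨C, hC⟩ := exists_abs_aeval_le_mul_intPolyHeight_mul d α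
  obtain ⟨H₀, hH₀⟩ := eventually_atTop.mp <|
    (((tendsto_rpow_atTop hε).comp tendsto_natCast_atTop_atTop).eventually_ge_atTop C).and
      (eventually_gt_atTop (S.sup intPolyHeight))
  refine ⟨H₀, fun ξ hξ P hP hdeg hroot hH => ?_⟩
  obtain ⟨hCH, hPS⟩ := hH₀ _ hH
  have ha₀ := coeff_zero_ne_zero_of_irreducible_of_aeval_eq_zero hP hξ hroot
  have hnorm := padicNorm_coeff_zero_le_min_padicNorm_norm p hP.ne_zero
  have hnorm₀ := (Rat.cast_nonneg.mpr (padicNorm.nonneg (p := p) (P.coeff 0 : ℚ))).trans hnorm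
  rcases le_or_gt 1 |α - ξ| with hfar | hnear
  · have he : -(d : ℝ) - 1 - 2 * ε ≤ -1 := by linarith [(d.cast_nonneg : (0 : ℝ) ≤ d)]
    exact ((intPolyHeight_rpow_le_padicNorm_coeff_zero p ha₀ he).trans hnorm).trans
      (le_mul_of_one_le_left hnorm₀ hfar)
  · have hnotin : P ∉ S := fun hPS' => (Finset.le_sup hPS').not_gt hPS
    have hHpos : (0 : ℝ) < intPolyHeight P := by exact_mod_cast one_le_intPolyHeight hP.ne_zero
    have hexp : -(d : ℝ) - 1 - 2 * ε = (-(d : ℝ) - ε) - (1 + ε) := by ring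
    rw [hexp]
    refine rpow_sub_le_of_rpow_le_rpow_mul hHpos ?_
    have hα := hC P ξ hdeg hroot hnear
    calc (intPolyHeight P : ℝ) ^ (-(d : ℝ) - ε)
        ≤ |aeval α P| * padicNorm p (P.coeff 0 : ℚ) := hS P hP.ne_zero hdeg ha₀ hnotin
      _ ≤ C * intPolyHeight P * |α - ξ| * _ :=
          mul_le_mul hα hnorm (Rat.cast_nonneg.mpr (padicNorm.nonneg _)) ((abs_nonneg _).trans hα)
      _ ≤ (intPolyHeight P : ℝ) ^ ε * intPolyHeight P * |α - ξ| * _ := by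
          gcongr
          exact hCH
      _ = _ := by rw [Real.rpow_add hHpos, Real.rpow_one]; ring

/-- Let `α` be a real algebraic number of degree `d+1` and `ε > 0`.
Assume (a consequence of the `p`-adic Schmidt subspace theorem) that all but
finitely many nonzero integer polynomials `P` of degree at most `d` with
`P(0) ≠ 0` satisfy `|P(α)|·|P(0)|_p ≥ H(P)^{−d−ε}`.  Then every nonzero real
algebraic number `ξ` of degree at most `d` of sufficiently large height, with
minimal defining polynomial `P` over `ℤ`, satisfies
`|α − ξ| · min{|Norm(ξ)|_p, 1} ≥ H(ξ)^{−d−1−2ε}`. -/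
theorem stmt18 (p : ℕ) [hp : Fact p.Prime] (d : ℕ) (hd : 1 ≤ d)
    (α : ℝ) (hα : (minpoly ℚ α).natDegree = d + 1)
    (ε : ℝ) (hε : 0 < ε)
    (hSchmidt : ∃ S : Finset (Polynomial ℤ), ∀ P : Polynomial ℤ,
      P ≠ 0 → P.natDegree ≤ d → P.coeff 0 ≠ 0 → P ∉ S →
      (intPolyHeight P : ℝ) ^ (-(d : ℝ) - ε)
        ≤ |Polynomial.aeval α P| * (padicNorm p (P.coeff 0 : ℚ) : ℝ)) :
    ∃ H₀ : ℕ, ∀ ξ : ℝ, ξ ≠ 0 → ∀ P : Polynomial ℤ,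
      Irreducible P → P.natDegree ≤ d → Polynomial.aeval ξ P = 0 →
      H₀ ≤ intPolyHeight P →
      (intPolyHeight P : ℝ) ^ (-(d : ℝ) - 1 - 2 * ε)
        ≤ |α - ξ| * min ((padicNorm p ((-1 : ℚ) ^ P.natDegree
            * (P.coeff 0 : ℚ) / (P.coeff P.natDegree : ℚ)) : ℝ)) 1 :=
  stmt18_general p (hp := hp) d α ε hε hSchmidt
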